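/- For every n ≥ 0 and t > 0, ∫_0^1 e^{t/2} / (u + (1−u)e^t) du = t e^{t/2} / (e^t − 1), and consequently the function G(u,t) = e^{t/2}/(u + (1−u)e^t) is the exponential generating function in t of the polynomials (1/2^n) Q_n(u; 0, 1). -/

import Mathlib

open scoped BigOperators
open MeasureTheory

/-- MacMahon numbers `M n k`: `M n 1 = 1`, `M n k = 0` outside `1 ≤ k ≤ n`, and
`M n k = (2k−1) M (n−1) k + (2n−2k+1) M (n−1) (k−1)`. -/
def macmahon : ℕ → ℕ → ℕ
  | 0, _ => 0
  | 1, 1 => 1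
  | 1, _ => 0
  | n + 2, 0 => 0
  | n + 2, k + 1 =>
      (2 * k + 1) * macmahon (n + 1) (k + 1) +
        (2 * (n + 2) - 2 * (k + 1) + 1) * macmahon (n + 1) k

/-- Derivative polynomial `Q_n(u;a,b) = Σ_{k=1}^{n+1} M_{n+1,k} (u-a)^(n+1-k) (u-b)^(k-1)`. -/
noncomputable def Q (n : ℕ) (a b u : ℝ) : ℝ :=
  ∑ k ∈ Finset.Icc 1 (n + 1), (macmahon (n + 1) k : ℝ) * (u - a) ^ (n + 1 - k) * (u - b) ^ (k - 1)

/-!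
With `r = u / (u + (1 - u) eᶻ)` and `G = e^{z/2} / (u + (1 - u) eᶻ)` one has `r' = r² - r` and
`G' = G (r - 1/2)`, so by induction `G⁽ⁿ⁾ = G · Pₙ(r) / 2ⁿ` with `P₀ = 1` and
`Pₙ₊₁ = (2x - 1) Pₙ + 2x(x - 1) Pₙ'`. On the monomials `xᵐ (x - 1)ʲ` this recurrence acts with
the weights `2j + 1` and `2m + 1` of the MacMahon recurrence, whence `Pₙ(x) = Qₙ(x; 0, 1)`.
At `z = 0` we have `G = 1` and `r = u`, and `G` is holomorphic near `0`, so its Taylor series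
there is the claimed one. The integral is elementary: `u + (1 - u) eᵗ` is affine in `u`.
-/

open Polynomial Finset

lemma macmahon_zero_right : ∀ n, macmahon n 0 = 0
  | 0 | 1 | _ + 2 => rfl

lemma macmahon_eq_zero_of_lt : ∀ {n k : ℕ}, n < k → macmahon n k = 0
  | 0, _, _ => rfl
  | 1, _ + 2, _ => rfl
  | n + 2, k + 1, h => by
      rw [macmahon, macmahon_eq_zero_of_lt (by omega : n + 1 < k + 1),
        macmahon_eq_zero_of_lt (by omega : n + 1 < k), mul_zero, mul_zero, add_zero]

lemma macmahon_succ_succ {n j : ℕ} (hj : j ≤ n + 1) :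
    macmahon (n + 2) (j + 1) = (2 * j + 1) * macmahon (n + 1) (j + 1) +
      (2 * (n + 1 - j) + 1) * macmahon (n + 1) j := by
  rw [macmahon]
  congr 3
  omega

lemma mul_derivative_pow {R : Type*} [CommSemiring R] (p : R[X]) (m : ℕ) :
    p * derivative (p ^ m) = m * p ^ m * derivative p := by
  cases m with
  | zero => simp
  | succ m => rw [derivative_pow, C_eq_natCast, Nat.add_sub_cancel, pow_succ]; ring

noncomputable def macmahonPoly (n : ℕ) : ℤ[X] :=
  ∑ j ∈ range (n + 1), (macmahon (n + 1) (j + 1) : ℤ[X]) * (X ^ (n - j) * (X - 1) ^ j)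

lemma macmahonPoly_zero : macmahonPoly 0 = 1 := by
  simp [macmahonPoly, macmahon]

lemma recurrence_X_pow_mul_X_sub_one_pow {R : Type*} [CommRing R] (m j : ℕ) :
    (2 * X - 1 : R[X]) * (X ^ m * (X - 1) ^ j) +
        2 * X * (X - 1) * derivative (X ^ m * (X - 1) ^ j) =
      (2 * j + 1 : R[X]) * (X ^ (m + 1) * (X - 1) ^ j) +
        (2 * m + 1 : R[X]) * (X ^ m * (X - 1) ^ (j + 1)) := by
  have hX := mul_derivative_pow (X : R[X]) m
  have hX1 := mul_derivative_pow (X - 1 : R[X]) j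
  simp only [derivative_X, derivative_sub, derivative_one, sub_zero, mul_one] at hX hX1
  rw [derivative_mul]
  linear_combination (2 * (X - 1) * (X - 1) ^ j) * hX + (2 * X * X ^ m) * hX1

lemma macmahonPoly_succ (n : ℕ) :
    macmahonPoly (n + 1) =
      (2 * X - 1) * macmahonPoly n + 2 * X * (X - 1) * derivative (macmahonPoly n) := by
  have hrhs : (2 * X - 1) * macmahonPoly n + 2 * X * (X - 1) * derivative (macmahonPoly n) =
      ∑ j ∈ range (n + 1), (macmahon (n + 1) (j + 1) : ℤ[X]) *
        ((2 * j + 1 : ℤ[X]) * (X ^ (n - j + 1) * (X - 1) ^ j) +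
          (2 * (n - j : ℕ) + 1 : ℤ[X]) * (X ^ (n - j) * (X - 1) ^ (j + 1))) := by
    simp only [macmahonPoly, derivative_sum, derivative_natCast_mul, mul_sum, ← sum_add_distrib,
      ← recurrence_X_pow_mul_X_sub_one_pow]
    refine sum_congr rfl fun j _ => ?_
    ring
  have hsplit : macmahonPoly (n + 1) =
      ∑ j ∈ range (n + 2), ((2 * j + 1 : ℤ[X]) * (macmahon (n + 1) (j + 1) : ℤ[X]) *
          (X ^ (n + 1 - j) * (X - 1) ^ j) +
        (2 * (n + 1 - j : ℕ) + 1 : ℤ[X]) * (macmahon (n + 1) j : ℤ[X]) *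
          (X ^ (n + 1 - j) * (X - 1) ^ j)) := by
    refine sum_congr rfl fun j hj => ?_
    rw [macmahon_succ_succ (by simpa [Nat.lt_succ_iff] using hj)]
    push_cast
    ring
  -- the boundary terms carry `macmahon (n + 1) (n + 2) = 0` and `macmahon (n + 1) 0 = 0`
  rw [hrhs, hsplit, sum_add_distrib, sum_range_succ, sum_range_succ' _ (n + 1),
    macmahon_eq_zero_of_lt (by omega : n + 1 < n + 2), macmahon_zero_right]
  simp only [Nat.cast_zero, mul_zero, zero_mul, add_zero, ← sum_add_distrib]
  refine sum_congr rfl fun j hj => ?_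
  have hj : j ≤ n := by simpa [Nat.lt_succ_iff] using hj
  rw [show n + 1 - j = n - j + 1 by omega, show n + 1 - (j + 1) = n - j by omega]
  ring

lemma Q_zero_one_eq_aeval (n : ℕ) (u : ℝ) : Q n 0 1 u = aeval u (macmahonPoly n) := by
  rw [Q, macmahonPoly, map_sum, ← Finset.Ico_add_one_right_eq_Icc, sum_Ico_eq_sum_range]
  refine sum_congr rfl fun j hj => ?_
  rw [show n + 1 - (1 + j) = n - j by omega, add_comm 1 j, Nat.add_sub_cancel]
  simp [mul_assoc]

namespace MacMahon

open Complex

variable (u : ℂ)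

noncomputable def denom (z : ℂ) : ℂ := u + (1 - u) * cexp z

noncomputable def ratio (z : ℂ) : ℂ := u / denom u z

noncomputable def egf (z : ℂ) : ℂ := cexp (z / 2) / denom u z

variable {u}

lemma hasDerivAt_denom (z : ℂ) : HasDerivAt (denom u) ((1 - u) * cexp z) z :=
  ((hasDerivAt_exp z).const_mul (1 - u)).const_add u

lemma hasDerivAt_ratio {z : ℂ} (hz : denom u z ≠ 0) :
    HasDerivAt (ratio u) (ratio u z ^ 2 - ratio u z) z := by
  refine ((hasDerivAt_const z u).div (hasDerivAt_denom z) hz).congr_deriv ?_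
  simp only [ratio]
  rw [denom] at hz ⊢
  field_simp
  ring

lemma hasDerivAt_egf {z : ℂ} (hz : denom u z ≠ 0) :
    HasDerivAt (egf u) (egf u z * (ratio u z - 1 / 2)) z := by
  have hnum : HasDerivAt (fun z ↦ cexp (z / 2)) (cexp (z / 2) * (1 / 2)) z :=
    ((hasDerivAt_id z).div_const 2).cexp
  refine (hnum.div (hasDerivAt_denom z) hz).congr_deriv ?_
  simp only [egf, ratio]
  rw [denom] at hz ⊢
  field_simp
  ring

lemma iteratedDeriv_egf_eqOn {s : Set ℂ} (hs : IsOpen s) (hD : ∀ z ∈ s, denom u z ≠ 0)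
    (n : ℕ) :
    Set.EqOn (iteratedDeriv n (egf u))
      (fun z ↦ egf u z * aeval (ratio u z) (macmahonPoly n) / 2 ^ n) s := by
  induction n with
  | zero => intro z _; simp [macmahonPoly_zero]
  | succ n ih =>
    intro z hz
    rw [iteratedDeriv_succ, (Filter.eventuallyEq_of_mem (hs.mem_nhds hz) ih).deriv_eq]
    have hpoly : HasDerivAt (fun w ↦ aeval (ratio u w) (macmahonPoly n))
        (aeval (ratio u z) (derivative (macmahonPoly n)) * (ratio u z ^ 2 - ratio u z)) z :=
      ((macmahonPoly n).hasDerivAt_aeval (ratio u z)).comp z (hasDerivAt_ratio (hD z hz))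
    rw [(((hasDerivAt_egf (hD z hz)).fun_mul hpoly).div_const _).deriv, macmahonPoly_succ]
    simp only [map_add, map_mul, map_sub, map_ofNat, aeval_X, map_one]
    ring

lemma exists_ball_denom_ne_zero (u : ℂ) :
    ∃ ε > 0, ∀ z ∈ Metric.ball (0 : ℂ) ε, denom u z ≠ 0 := by
  have hcont : Continuous (denom u) := by unfold denom; fun_prop
  exact Metric.isOpen_iff.mp (isOpen_ne_fun hcont continuous_const) 0 (by simp [denom])

lemma hasSum_egf (u : ℂ) : ∃ ε > 0, ∀ z ∈ Metric.ball (0 : ℂ) ε,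
    HasSum (fun n : ℕ ↦ aeval u (macmahonPoly n) / 2 ^ n * z ^ n / n.factorial) (egf u z) := by
  obtain ⟨ε, hε, hD⟩ := exists_ball_denom_ne_zero u
  have hdiff : DifferentiableOn ℂ (egf u) (Metric.ball 0 ε) := fun z hz ↦
    (hasDerivAt_egf (hD z hz)).differentiableAt.differentiableWithinAt
  refine ⟨ε, hε, fun z hz ↦ ?_⟩
  have htaylor_coeff (n : ℕ) : iteratedDeriv n (egf u) 0 = aeval u (macmahonPoly n) / 2 ^ n := by
    rw [iteratedDeriv_egf_eqOn Metric.isOpen_ball hD n (Metric.mem_ball_self hε)]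
    simp [egf, ratio, denom]
  simpa [htaylor_coeff, div_eq_inv_mul, mul_comm, mul_left_comm]
    using Complex.hasSum_taylorSeries_on_ball hdiff hz

end MacMahon

lemma hasSum_Q_zero_one (u : ℝ) : ∃ ε > (0:ℝ), ∀ t : ℝ, |t| < ε →
    HasSum (fun n : ℕ => (1 / 2 ^ n : ℝ) * Q n 0 1 u * t ^ n / n.factorial)
      (Real.exp (t / 2) / (u + (1 - u) * Real.exp t)) := by
  obtain ⟨ε, hε, hsum⟩ := MacMahon.hasSum_egf u
  refine ⟨ε, hε, fun t ht ↦ Complex.hasSum_ofReal.mp ?_⟩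
  convert hsum t (by simpa using ht) using 1
  · ext n
    have hcast : ((aeval u (macmahonPoly n) : ℝ) : ℂ) = aeval (u : ℂ) (macmahonPoly n) :=
      (aeval_algebraMap_apply ℂ u (macmahonPoly n)).symm
    push_cast [Q_zero_one_eq_aeval, hcast]
    ring
  · simp [MacMahon.egf, MacMahon.denom]

lemma integral_inv_add_one_sub_mul {c : ℝ} (hc : 0 < c) (hc1 : c ≠ 1) :
    ∫ u in (0:ℝ)..1, (u + (1 - u) * c)⁻¹ = Real.log c / (c - 1) := by
  have hlin : (fun u : ℝ ↦ (u + (1 - u) * c)⁻¹) = fun u ↦ ((1 - c) * u + c)⁻¹ := by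
    funext u; ring_nf
  rw [hlin, intervalIntegral.integral_comp_mul_add (fun x ↦ x⁻¹) (sub_ne_zero.2 hc1.symm),
    mul_zero, zero_add, mul_one, sub_add_cancel, integral_inv_of_pos hc one_pos, smul_eq_mul,
    one_div, Real.log_inv]
  have hc1' : c - 1 ≠ 0 := sub_ne_zero.2 hc1
  field_simp
  ring

lemma integral_exp_half_div_add_one_sub_mul_exp {t : ℝ} (ht : 0 < t) :
    ∫ u in (0:ℝ)..1, Real.exp (t / 2) / (u + (1 - u) * Real.exp t) =
      t * Real.exp (t / 2) / (Real.exp t - 1) := by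
  simp_rw [div_eq_mul_inv (Real.exp (t / 2))]
  rw [intervalIntegral.integral_const_mul,
    integral_inv_add_one_sub_mul (Real.exp_pos t) (Real.one_lt_exp_iff.mpr ht).ne', Real.log_exp]
  ring

theorem Q_generating_function :
    (∀ t : ℝ, 0 < t →
        ∫ u in (0:ℝ)..1, Real.exp (t / 2) / (u + (1 - u) * Real.exp t) =
          t * Real.exp (t / 2) / (Real.exp t - 1)) ∧
      ∀ u : ℝ, u ∈ Set.Ioo (0:ℝ) 1 → ∃ ε > (0:ℝ), ∀ t : ℝ, |t| < ε →
        HasSum (fun n : ℕ => (1 / 2 ^ n : ℝ) * Q n 0 1 u * t ^ n / n.factorial)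
          (Real.exp (t / 2) / (u + (1 - u) * Real.exp t)) :=
  ⟨fun _ ht ↦ integral_exp_half_div_add_one_sub_mul_exp ht, fun u _ ↦ hasSum_Q_zero_one u⟩
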